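/- arXiv:1804.02216 — 2 statements merged into one kernel-verified Lean document; each statement's English description precedes it below -/
import Mathlib

section
/- Let k be an algebraically closed field of characteristic not 2, and let q = l₁·l₂ be a product of two non-proportional linear forms in k[x,y,z] (a nodal conic). For a homogeneous form f of degree n not vanishing identically on either line l_i = 0, the scheme V(q,f) ⊂ P² is singular if and only if either (a) V(l_i, f) is singular for some i ∈ {1,2}, or (b) f vanishes at the unique common zero of l₁ and l₂ (the node of the conic). -/
open MvPolynomial

private lemma fin3_all {P : Fin 3 → Prop} (h0 : P 0) (h1 : P 1) (h2 : P 2) : ∀ i, P i := by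
  intro i
  fin_cases i
  · exact h0
  · exact h1
  · exact h2

private lemma deg1_single {d : Fin 3 →₀ ℕ} (hd : ∑ i : Fin 3, d i = 1) :
    ∃ i : Fin 3, d = Finsupp.single i 1 := by
  rw [Fin.sum_univ_three] at hd
  have h : (d 0 = 1 ∧ d 1 = 0 ∧ d 2 = 0) ∨ (d 0 = 0 ∧ d 1 = 1 ∧ d 2 = 0) ∨
      (d 0 = 0 ∧ d 1 = 0 ∧ d 2 = 1) := by omega
  rcases h with ⟨h0, h1, h2⟩ | ⟨h0, h1, h2⟩ | ⟨h0, h1, h2⟩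
  · exact ⟨0, Finsupp.ext fun j => by fin_cases j <;> simp [Finsupp.single_apply, h0, h1, h2]⟩
  · exact ⟨1, Finsupp.ext fun j => by fin_cases j <;> simp [Finsupp.single_apply, h0, h1, h2]⟩
  · exact ⟨2, Finsupp.ext fun j => by fin_cases j <;> simp [Finsupp.single_apply, h0, h1, h2]⟩

private lemma homog_deg_sum {k : Type*} [CommRing k] {f : MvPolynomial (Fin 3) k} {n : ℕ}
    (hf : f.IsHomogeneous n) {d : Fin 3 →₀ ℕ} (hd : coeff d f ≠ 0) :
    ∑ i : Fin 3, d i = n := by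
  have h := hf hd
  rw [Finsupp.weight_apply] at h
  simp only [Finsupp.sum, Pi.one_apply, smul_eq_mul, mul_one] at h
  rw [← h]
  exact (Finset.sum_subset (Finset.subset_univ d.support) (fun x _ hx => by
    simpa using Finsupp.notMem_support_iff.mp hx)).symm

private lemma rep1 {k : Type*} [CommRing k] {l : MvPolynomial (Fin 3) k}
    (hl : l.IsHomogeneous 1) :
    l = ∑ i : Fin 3, C (coeff (Finsupp.single i 1) l) * X i := by
  apply MvPolynomial.ext
  intro d
  rw [coeff_sum]
  simp_rw [coeff_C_mul, coeff_X']
  by_cases hd : ∃ i : Fin 3, d = Finsupp.single i 1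
  · obtain ⟨i, rfl⟩ := hd
    rw [Finset.sum_eq_single i]
    · simp
    · intro j _ hj
      rw [if_neg, mul_zero]
      intro hsing
      exact hj (by
        have := (Finsupp.single_left_inj (one_ne_zero)).mp hsing
        exact this)
    · intro h; exact absurd (Finset.mem_univ i) h
  · have h0 : coeff d l = 0 := by
      by_contra hc
      exact hd (deg1_single (homog_deg_sum hl hc))
    rw [h0]
    refine (Finset.sum_eq_zero fun i _ => ?_).symm
    rw [if_neg, mul_zero]
    intro hsing
    exact hd ⟨i, hsing.symm⟩

private lemma eval_rep1 {k : Type*} [CommRing k] {l : MvPolynomial (Fin 3) k}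
    (hl : l.IsHomogeneous 1) (w : Fin 3 → k) :
    eval w l = ∑ i : Fin 3, coeff (Finsupp.single i 1) l * w i := by
  conv_lhs => rw [rep1 hl]
  simp

private lemma eval_smul_homog {k : Type*} [CommRing k] {f : MvPolynomial (Fin 3) k} {n : ℕ}
    (hf : f.IsHomogeneous n) (c : k) (u : Fin 3 → k) :
    eval (c • u) f = c ^ n * eval u f := by
  rw [eval_eq', eval_eq', Finset.mul_sum]
  apply Finset.sum_congr rfl
  intro d hd
  have hdeg : ∑ i : Fin 3, d i = n := homog_deg_sum hf (mem_support_iff.mp hd)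
  calc coeff d f * ∏ i, (c • u) i ^ d i
      = coeff d f * ∏ i, (c ^ d i * u i ^ d i) := by
        simp [mul_pow]
    _ = coeff d f * ((∏ i, c ^ d i) * ∏ i, u i ^ d i) := by
        rw [Finset.prod_mul_distrib]
    _ = c ^ n * (coeff d f * ∏ i, u i ^ d i) := by
        rw [Finset.prod_pow_eq_pow_sum, hdeg]; ring

private lemma minors_dep {k : Type*} [Field k] {x y : Fin 3 → k} (hx : x ≠ 0)
    (h : ∀ i j : Fin 3, x i * y j - x j * y i = 0) : ∃ c : k, y = c • x := by
  obtain ⟨i₀, hi₀⟩ := Function.ne_iff.mp hx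
  simp only [Pi.zero_apply] at hi₀
  refine ⟨y i₀ / x i₀, funext fun j => ?_⟩
  have hij := h i₀ j
  simp only [Pi.smul_apply, smul_eq_mul]
  field_simp
  linear_combination hij

private lemma common_zero_prop {k : Type*} [Field k] {a b u v : Fin 3 → k}
    (ha : a ≠ 0) (hab : ∀ c : k, b ≠ c • a) (hv : v ≠ 0)
    (hu1 : ∑ i : Fin 3, a i * u i = 0)
    (hu2 : ∑ i : Fin 3, b i * u i = 0)
    (hv1 : ∑ i : Fin 3, a i * v i = 0)
    (hv2 : ∑ i : Fin 3, b i * v i = 0) :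
    ∃ c : k, u = c • v := by
  rw [Fin.sum_univ_three] at hu1 hu2 hv1 hv2
  set nn : Fin 3 → k :=
    ![a 1 * b 2 - a 2 * b 1, a 2 * b 0 - a 0 * b 2, a 0 * b 1 - a 1 * b 0] with hnn
  have hnz : nn ≠ 0 := by
    intro h0
    have h01 : a 1 * b 2 - a 2 * b 1 = 0 := by simpa [hnn] using congrFun h0 0
    have h02 : a 2 * b 0 - a 0 * b 2 = 0 := by simpa [hnn] using congrFun h0 1
    have h03 : a 0 * b 1 - a 1 * b 0 = 0 := by simpa [hnn] using congrFun h0 2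
    have hmin : ∀ i j : Fin 3, a i * b j - a j * b i = 0 := by
      refine fin3_all (fin3_all ?_ ?_ ?_) (fin3_all ?_ ?_ ?_) (fin3_all ?_ ?_ ?_) <;>
        first
          | ring1
          | linear_combination h01 | linear_combination -h01
          | linear_combination h02 | linear_combination -h02
          | linear_combination h03 | linear_combination -h03
    obtain ⟨c, hc⟩ := minors_dep (y := b) ha hmin
    exact hab c hc
  have perp : ∀ w : Fin 3 → k,
      a 0 * w 0 + a 1 * w 1 + a 2 * w 2 = 0 →
      b 0 * w 0 + b 1 * w 1 + b 2 * w 2 = 0 →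
      ∀ i j : Fin 3, nn i * w j - nn j * w i = 0 := by
    intro w hw1 hw2
    refine fin3_all (fin3_all ?_ ?_ ?_) (fin3_all ?_ ?_ ?_) (fin3_all ?_ ?_ ?_) <;>
      simp only [hnn, Matrix.cons_val_zero, Matrix.cons_val_one, Matrix.head_cons,
        Matrix.cons_val_two, Matrix.tail_cons] <;>
      first
        | ring1
        | linear_combination b 0 * hw1 - a 0 * hw2
        | linear_combination a 0 * hw2 - b 0 * hw1
        | linear_combination b 1 * hw1 - a 1 * hw2
        | linear_combination a 1 * hw2 - b 1 * hw1
        | linear_combination b 2 * hw1 - a 2 * hw2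
        | linear_combination a 2 * hw2 - b 2 * hw1
  obtain ⟨c1, hc1⟩ := minors_dep (y := u) hnz (perp u hu1 hu2)
  obtain ⟨c2, hc2⟩ := minors_dep (y := v) hnz (perp v hv1 hv2)
  have hc2' : c2 ≠ 0 := by
    rintro rfl
    rw [zero_smul] at hc2
    exact hv hc2
  refine ⟨c1 / c2, ?_⟩
  rw [hc1, hc2, smul_smul, div_mul_cancel₀ _ hc2']

private lemma node_unique {k : Type*} [Field k] {l₁ l₂ : MvPolynomial (Fin 3) k}
    (Hl₁ : l₁.IsHomogeneous 1) (Hl₂ : l₂.IsHomogeneous 1) (hl₁0 : l₁ ≠ 0)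
    (hprop : ∀ c : k, l₂ ≠ c • l₁)
    {u v : Fin 3 → k} (hv : v ≠ 0)
    (hu1 : eval u l₁ = 0) (hu2 : eval u l₂ = 0)
    (hv1 : eval v l₁ = 0) (hv2 : eval v l₂ = 0) :
    ∃ c : k, u = c • v := by
  have haz : (fun i => coeff (Finsupp.single i 1) l₁) ≠ (0 : Fin 3 → k) := by
    intro h
    apply hl₁0
    rw [rep1 Hl₁]
    refine Finset.sum_eq_zero fun i _ => ?_
    have : coeff (Finsupp.single i 1) l₁ = 0 := by simpa using congrFun h i
    rw [this]; simp
  have hab : ∀ c : k, (fun i => coeff (Finsupp.single i 1) l₂) ≠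
      c • (fun i => coeff (Finsupp.single i 1) l₁ : Fin 3 → k) := by
    intro c hc
    apply hprop c
    rw [rep1 Hl₂, rep1 Hl₁, Finset.smul_sum]
    refine Finset.sum_congr rfl fun i _ => ?_
    have hci : coeff (Finsupp.single i 1) l₂ = c * coeff (Finsupp.single i 1) l₁ := by
      simpa using congrFun hc i
    rw [hci, map_mul, smul_eq_C_mul, mul_assoc]
  exact common_zero_prop haz hab hv
    (by rw [← eval_rep1 Hl₁]; exact hu1)
    (by rw [← eval_rep1 Hl₂]; exact hu2)
    (by rw [← eval_rep1 Hl₁]; exact hv1)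
    (by rw [← eval_rep1 Hl₂]; exact hv2)

/-- The pair of forms `(g, h)` cuts out a singular subscheme of `P²` (Jacobian criterion):
there is a nonzero point where `g`, `h` and all `2×2` minors of the Jacobian of `(g,h)` vanish. -/
def SingPair {k : Type*} [CommRing k] (g h : MvPolynomial (Fin 3) k) : Prop :=
  ∃ u : Fin 3 → k, u ≠ 0 ∧ eval u g = 0 ∧ eval u h = 0 ∧
    ∀ i j : Fin 3,
      eval u (pderiv i g * pderiv j h - pderiv j g * pderiv i h) = 0

/-- For a nodal conic `q = l₁l₂` (`l₁`, `l₂` non-proportional linear forms) and a form `f` of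
degree `n` with `lᵢ ∤ f`, the scheme `V(q,f) ⊂ P²` is singular iff some `V(lᵢ,f)` is singular
or `f` vanishes at the node of the conic. -/
theorem stmt2 {k : Type*} [Field k] [IsAlgClosed k] (hchar : (2 : k) ≠ 0) (n : ℕ)
    (l₁ l₂ f : MvPolynomial (Fin 3) k)
    (hl₁ : l₁ ∈ homogeneousSubmodule (Fin 3) k 1)
    (hl₂ : l₂ ∈ homogeneousSubmodule (Fin 3) k 1)
    (hl₁0 : l₁ ≠ 0) (hl₂0 : l₂ ≠ 0)
    (hprop : ∀ c : k, l₂ ≠ c • l₁)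
    (hf : f ∈ homogeneousSubmodule (Fin 3) k n)
    (hf₁ : ¬ l₁ ∣ f) (hf₂ : ¬ l₂ ∣ f)
    (u₀ : Fin 3 → k) (hu₀ : u₀ ≠ 0)
    (hn₁ : eval u₀ l₁ = 0) (hn₂ : eval u₀ l₂ = 0) :
    SingPair (l₁ * l₂) f ↔ (SingPair l₁ f ∨ SingPair l₂ f ∨ eval u₀ f = 0) := by
  have Hl₁ : l₁.IsHomogeneous 1 := (mem_homogeneousSubmodule _ _).mp hl₁
  have Hl₂ : l₂.IsHomogeneous 1 := (mem_homogeneousSubmodule _ _).mp hl₂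
  have Hf : f.IsHomogeneous n := (mem_homogeneousSubmodule _ _).mp hf
  have key : ∀ (u : Fin 3 → k) (i j : Fin 3),
      eval u (pderiv i (l₁ * l₂) * pderiv j f - pderiv j (l₁ * l₂) * pderiv i f)
      = eval u l₂ * eval u (pderiv i l₁ * pderiv j f - pderiv j l₁ * pderiv i f)
        + eval u l₁ * eval u (pderiv i l₂ * pderiv j f - pderiv j l₂ * pderiv i f) := by
    intro u i j
    simp only [pderiv_mul, map_sub, map_mul, map_add]
    ring
  constructor
  · rintro ⟨u, hu, hq, hfu, hmin⟩
    rw [map_mul] at hq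
    by_cases h1 : eval u l₁ = 0
    · by_cases h2 : eval u l₂ = 0
      · -- node case
        right; right
        obtain ⟨c, hc⟩ := node_unique Hl₁ Hl₂ hl₁0 hprop hu₀ h1 h2 hn₁ hn₂
        have hc0 : c ≠ 0 := by
          rintro rfl
          rw [zero_smul] at hc
          exact hu hc
        have := hfu
        rw [hc, eval_smul_homog Hf] at this
        rcases mul_eq_zero.mp this with h | h
        · exact absurd h (pow_ne_zero _ hc0)
        · exact h
      · -- singular point of V(l₁, f)
        left
        refine ⟨u, hu, h1, hfu, fun i j => ?_⟩
        have hk := (key u i j).symm.trans (hmin i j)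
        rw [h1] at hk
        have : eval u l₂ * eval u (pderiv i l₁ * pderiv j f - pderiv j l₁ * pderiv i f) = 0 := by
          linear_combination hk
        exact (mul_eq_zero.mp this).resolve_left h2
    · have h2 : eval u l₂ = 0 := by
        rcases mul_eq_zero.mp hq with h | h
        · exact absurd h h1
        · exact h
      right; left
      refine ⟨u, hu, h2, hfu, fun i j => ?_⟩
      have hk := (key u i j).symm.trans (hmin i j)
      rw [h2] at hk
      have : eval u l₁ * eval u (pderiv i l₂ * pderiv j f - pderiv j l₂ * pderiv i f) = 0 := by
        linear_combination hk
      exact (mul_eq_zero.mp this).resolve_left h1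
  · rintro (⟨u, hu, h1, hfu, hm⟩ | ⟨u, hu, h2, hfu, hm⟩ | hnode)
    · exact ⟨u, hu, by rw [map_mul, h1, zero_mul], hfu, fun i j => by
        rw [key, hm i j, h1]; ring⟩
    · exact ⟨u, hu, by rw [map_mul, h2, mul_zero], hfu, fun i j => by
        rw [key, hm i j, h2]; ring⟩
    · exact ⟨u₀, hu₀, by rw [map_mul, hn₁, zero_mul], hnode, fun i j => by
        rw [key, hn₁, hn₂]; ring⟩
end

section
/- In the ring F₂[c₁,c₂,c₃,s,h,t]/(t³ + c₁t² + c₂t + c₃), the element (s+t)(h+nt)(s+h+(n−2)t−c₁), when written in the normal form t²ξ₀ + tξ₁ + ξ₂ (with ξ_i not involving t), has ξ₀ = 0; i.e., its t²-coefficient vanishes modulo 2 for every integer n. -/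
open Polynomial

noncomputable section

/-- The base ring `F₂[c₁,c₂,c₃,s,h]`: variables `0,1,2` are `c₁,c₂,c₃`, variable `3` is `s`,
variable `4` is `h`. -/
abbrev R11 : Type := MvPolynomial (Fin 5) (ZMod 2)

def cc₁ : R11 := MvPolynomial.X 0
def cc₂ : R11 := MvPolynomial.X 1
def cc₃ : R11 := MvPolynomial.X 2
def s11 : R11 := MvPolynomial.X 3
def h11 : R11 := MvPolynomial.X 4

/-- The element `(s+t)(h+nt)(s+h+(n−2)t−c₁)` as a polynomial in `t` over `R11`. -/
def P11 (n : ℕ) : Polynomial R11 :=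
  (C s11 + X) * (C h11 + C (n : R11) * X) *
    (C s11 + C h11 + C ((n : R11) - 2) * X - C cc₁)

lemma aux_deg (a b : R11) : (C a * X + C b : Polynomial R11).degree < 3 := by
  refine lt_of_le_of_lt ?_ (show (1:WithBot ℕ) < 3 by norm_num)
  compute_degree

lemma aux_coeff (a b : R11) : (C a * X + C b : Polynomial R11).coeff 2 = 0 := by
  simp [coeff_X, coeff_C]

/-- In `F₂[c₁,c₂,c₃,s,h][t]/(t³+c₁t²+c₂t+c₃)`, the element `(s+t)(h+nt)(s+h+(n−2)t−c₁)`,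
written in normal form `t²ξ₀ + tξ₁ + ξ₂` (reducing all powers `t^k`, `k ≥ 3`, via the monic
cubic relation), has `ξ₀ = 0` for every `n`: its `t²`-coefficient vanishes modulo 2. -/
theorem stmt11 (n : ℕ) :
    ∃ q r : Polynomial R11, r.degree < 3 ∧ r.coeff 2 = 0 ∧
      P11 n = (X ^ 3 + C cc₁ * X ^ 2 + C cc₂ * X + C cc₃) * q + r := by
  have h2 : (2 : R11) = 0 := by
    have : (2 : ZMod 2) = 0 := rfl
    simp [← map_ofNat (MvPolynomial.C : ZMod 2 →+* R11) 2, this]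
  have h2' : (2 : Polynomial R11) = 0 := by
    rw [← map_ofNat (C : R11 →+* Polynomial R11) 2, h2]; simp
  rcases Nat.even_or_odd n with ⟨k, hk⟩ | ⟨k, hk⟩
  · have hn : (n : R11) = 0 := by
      rw [hk]; push_cast; rw [show ((k:R11) + k) = 2 * k by ring, h2]; ring
    refine ⟨0, C (h11 * (s11 + h11 - cc₁)) * X + C (h11 * s11 * (s11 + h11 - cc₁)),
      aux_deg _ _, aux_coeff _ _, ?_⟩
    rw [P11, hn]
    simp only [show (0:R11) - 2 = -2 by ring, map_neg, map_mul, map_add, map_sub,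
      map_ofNat, h2', map_zero]
    ring
  · have hn : (n : R11) = 1 := by
      rw [hk]; push_cast; rw [h2]; ring
    refine ⟨1, C ((s11 + h11) * (s11 + h11 - cc₁) - s11 * h11 - cc₂) * X +
      C (s11 * h11 * (s11 + h11 - cc₁) - cc₃),
      aux_deg _ _, aux_coeff _ _, ?_⟩
    rw [P11, hn]
    simp only [show (1:R11) - 2 = -1 by ring, map_neg, map_one, map_mul, map_add, map_sub]
    linear_combination (-(X^2) * (X + C cc₁)) * h2'

end
end
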